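/- arXiv:2110.05420 — 8 statements merged into one kernel-verified Lean document; each statement's English description precedes it below -/
import Mathlib

section
/- Let p be a prime and C(x,y) = a x^3 + b y^3 a primitive integral binary cubic form that is anisotropic modulo p. Then the set R(C) = { C(x,y)/C(z,w) : x,y,z,w ∈ Z, C(z,w) ≠ 0 } is not dense in Q_p. -/
/-!
Anisotropy modulo `p` makes `p`-adic valuations of the values of `a x^n + b y^n` divisible by `n`:
if `p` divides a value then `p` divides both `x` and `y`, so the value is `p^n` times another value
of the form. Hence every ratio of values has valuation divisible by `n`, while for `n ≠ 1` the
open ball `‖q - p‖ < ‖p‖` consists of elements of valuation `1`.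
-/

namespace Padic

variable {p : ℕ} [Fact p.Prime]

theorem valuation_eq_one_of_norm_sub_lt {q : ℚ_[p]} (h : ‖q - p‖ < ‖(p : ℚ_[p])‖) :
    q.valuation = 1 := by
  have hnorm : ‖q‖ = ‖(p : ℚ_[p])‖ := norm_eq_of_norm_sub_lt_right h
  have hp0 : (p : ℚ_[p]) ≠ 0 := Nat.cast_ne_zero.mpr (Fact.out : p.Prime).ne_zero
  have hq0 : q ≠ 0 := norm_ne_zero_iff.mp (hnorm ▸ norm_ne_zero_iff.mpr hp0)
  have hp1 : (1 : ℝ) < p := mod_cast (Fact.out : p.Prime).one_lt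
  rw [norm_eq_zpow_neg_valuation hq0, norm_eq_zpow_neg_valuation hp0, valuation_p,
    zpow_right_inj₀ (by positivity) hp1.ne', neg_inj] at hnorm
  exact hnorm

theorem not_dense_setOf_dvd_valuation {n : ℕ} (hn : n ≠ 1) :
    ¬ Dense {q : ℚ_[p] | (n : ℤ) ∣ q.valuation} := by
  intro hdense
  have hp0 : (0 : ℝ) < ‖(p : ℚ_[p])‖ := by
    rw [norm_p]
    exact inv_pos.mpr (mod_cast (Fact.out : p.Prime).pos)
  obtain ⟨q, hball, hdvd⟩ := Metric.dense_iff.mp hdense (p : ℚ_[p]) _ hp0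
  rw [Metric.mem_ball, dist_eq_norm] at hball
  rw [Set.mem_ofPred_eq, valuation_eq_one_of_norm_sub_lt hball] at hdvd
  exact hn (Nat.dvd_one.mp (Int.natCast_dvd_natCast.mp hdvd))

theorem dvd_valuation_intCast_div {n : ℕ} {u v : ℤ} (hu : n ∣ padicValInt p u)
    (hv : n ∣ padicValInt p v) : (n : ℤ) ∣ ((u : ℚ_[p]) / v).valuation := by
  rcases eq_or_ne u 0 with rfl | hu0
  · simp
  rcases eq_or_ne v 0 with rfl | hv0
  · simp
  rw [div_eq_mul_inv, valuation_mul (mod_cast hu0) (inv_ne_zero (mod_cast hv0)), valuation_inv,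
    valuation_intCast, valuation_intCast, ← sub_eq_add_neg]
  exact dvd_sub (Int.natCast_dvd_natCast.mpr hu) (Int.natCast_dvd_natCast.mpr hv)

end Padic

theorem padicValInt_natCast_pow (p : ℕ) [Fact p.Prime] (n : ℕ) :
    padicValInt p ((p : ℤ) ^ n) = n := by
  rw [← Nat.cast_pow, padicValInt.of_nat, padicValNat.prime_pow]

theorem dvd_padicValInt_of_anisotropic {p : ℕ} [Fact p.Prime] {a b : ℤ} {n : ℕ} (hn : n ≠ 0)
    (haniso : ∀ x y : ℤ, (p : ℤ) ∣ a * x ^ n + b * y ^ n → (p : ℤ) ∣ x ∧ (p : ℤ) ∣ y)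
    (x y : ℤ) : n ∣ padicValInt p (a * x ^ n + b * y ^ n) := by
  induction hv : padicValInt p (a * x ^ n + b * y ^ n) using Nat.strong_induction_on
    generalizing x y with
  | _ v ih =>
  by_cases hdvd : (p : ℤ) ∣ a * x ^ n + b * y ^ n
  swap
  · rw [← hv, padicValInt.eq_zero_of_not_dvd hdvd]
    exact dvd_zero n
  by_cases h0 : a * x ^ n + b * y ^ n = 0
  · rw [← hv, h0, padicValInt.zero]
    exact dvd_zero n
  obtain ⟨⟨x', rfl⟩, ⟨y', rfl⟩⟩ := haniso x y hdvd
  have hscale : a * (p * x') ^ n + b * (p * y') ^ n = (p : ℤ) ^ n * (a * x' ^ n + b * y' ^ n) := by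
    ring
  rw [hscale] at h0 hv
  rw [padicValInt.mul (left_ne_zero_of_mul h0) (right_ne_zero_of_mul h0),
    padicValInt_natCast_pow] at hv
  rw [← hv]
  exact dvd_add dvd_rfl (ih _ (by omega) x' y' rfl)

theorem stmt_1_general (p : ℕ) [Fact p.Prime] (a b : ℤ)
    (haniso : ∀ x y : ℤ, (p : ℤ) ∣ (a * x ^ 3 + b * y ^ 3) → (p : ℤ) ∣ x ∧ (p : ℤ) ∣ y) :
    ¬ Dense {q : ℚ_[p] | ∃ x y z w : ℤ, a * z ^ 3 + b * w ^ 3 ≠ 0 ∧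
      q = ((a * x ^ 3 + b * y ^ 3 : ℤ) : ℚ_[p]) / ((a * z ^ 3 + b * w ^ 3 : ℤ) : ℚ_[p])} := by
  refine fun hdense => Padic.not_dense_setOf_dvd_valuation (p := p) (n := 3) (by norm_num)
    (hdense.mono ?_)
  rintro _ ⟨x, y, z, w, -, rfl⟩
  exact Padic.dvd_valuation_intCast_div (dvd_padicValInt_of_anisotropic three_ne_zero haniso x y)
    (dvd_padicValInt_of_anisotropic three_ne_zero haniso z w)

/-- If `C(x,y) = a x^3 + b y^3` is primitive, integral and anisotropic modulo `p`,
then the ratio set `R(C)` is not dense in `ℚ_p`. -/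
theorem stmt_1 (p : ℕ) [Fact p.Prime] (a b : ℤ) (ha : a ≠ 0) (hb : b ≠ 0)
    (hprim : IsCoprime a b)
    (haniso : ∀ x y : ℤ, (p : ℤ) ∣ (a * x ^ 3 + b * y ^ 3) → (p : ℤ) ∣ x ∧ (p : ℤ) ∣ y) :
    ¬ Dense {q : ℚ_[p] | ∃ x y z w : ℤ, a * z ^ 3 + b * w ^ 3 ≠ 0 ∧
      q = ((a * x ^ 3 + b * y ^ 3 : ℤ) : ℚ_[p]) / ((a * z ^ 3 + b * w ^ 3 : ℤ) : ℚ_[p])} :=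
  stmt_1_general p a b haniso
end

section
/- Let A ⊆ N be a set of positive integers. If A is dense in N with respect to the p-adic metric (i.e., the closure of A in Z_p contains N), then the quotient set R(A) = { a/b : a, b ∈ A } is dense in Q_p. -/
/-!
Since `ℕ` is dense in `ℤ_p`, so is `A`. Given `x ∈ ℚ_p`, pick `b ∈ A` so `p`-adically close
to `0` that `b x ∈ ℤ_p`, then `a ∈ A` close to `b x`; dividing by `b` is continuous, so `a / b`
is close to `x`.
-/

namespace PadicInt

variable {p : ℕ} [Fact p.Prime]

theorem dense_of_natCast_subset_closure {A : Set ℕ}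
    (h : ∀ n : ℕ, (n : ℤ_[p]) ∈ closure ((fun a : ℕ => (a : ℤ_[p])) '' A)) :
    Dense ((fun a : ℕ => (a : ℤ_[p])) '' A) :=
  dense_closure.mp (denseRange_natCast.mono (Set.range_subset_iff.mpr h))

theorem exists_mem_norm_mul_le_one_of_dense {S : Set ℤ_[p]} (hS : Dense S) (x : ℚ_[p]) :
    ∃ b ∈ S, ‖(b : ℚ_[p]) * x‖ ≤ 1 := by
  have hU : IsOpen {b : ℤ_[p] | ‖(b : ℚ_[p]) * x‖ < 1} :=
    isOpen_lt (by fun_prop) continuous_const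
  obtain ⟨b, hbS, hb⟩ := hS.exists_mem_open hU ⟨0, by simp⟩
  exact ⟨b, hbS, hb.le⟩

theorem dense_image2_div_of_dense {S : Set ℤ_[p]} (hS : Dense S) (h0 : 0 ∉ S) :
    Dense (Set.image2 (fun a b : ℤ_[p] => (a : ℚ_[p]) / b) S S) := by
  refine dense_iff_inter_open.mpr fun U hU ⟨x, hxU⟩ => ?_
  obtain ⟨b, hbS, hbx⟩ := exists_mem_norm_mul_le_one_of_dense hS x
  have hb : (b : ℚ_[p]) ≠ 0 := coe_ne_zero.mpr (ne_of_mem_of_not_mem hbS h0)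
  have hV : IsOpen {a : ℤ_[p] | (a : ℚ_[p]) / b ∈ U} :=
    hU.preimage (by fun_prop)
  have hbxV : (⟨b * x, hbx⟩ : ℤ_[p]) ∈ {a : ℤ_[p] | (a : ℚ_[p]) / b ∈ U} := by
    show (b * x : ℚ_[p]) / b ∈ U
    rwa [mul_div_cancel_left₀ x hb]
  obtain ⟨a, haS, haV⟩ := hS.exists_mem_open hV ⟨_, hbxV⟩
  exact ⟨_, haV, Set.mem_image2_of_mem haS hbS⟩

end PadicInt

/-- If a set `A` of positive integers is `p`-adically dense in `ℕ` (its closure in `ℤ_p`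
contains all natural numbers), then the quotient set `R(A)` is dense in `ℚ_p`. -/
theorem stmt_3 (p : ℕ) [Fact p.Prime] (A : Set ℕ) (hApos : ∀ a ∈ A, 0 < a)
    (hdense : ∀ n : ℕ, (n : ℤ_[p]) ∈ closure ((fun a : ℕ => (a : ℤ_[p])) '' A)) :
    Dense {q : ℚ_[p] | ∃ a ∈ A, ∃ b ∈ A, q = (a : ℚ_[p]) / (b : ℚ_[p])} := by
  have h0 : (0 : ℤ_[p]) ∉ (fun a : ℕ => (a : ℤ_[p])) '' A := by
    rintro ⟨a, ha, ha0⟩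
    exact (hApos a ha).ne' (Nat.cast_eq_zero.mp ha0)
  refine (PadicInt.dense_image2_div_of_dense
    (PadicInt.dense_of_natCast_subset_closure hdense) h0).mono ?_
  rintro _ ⟨_, ⟨a, ha, rfl⟩, _, ⟨b, hb, rfl⟩, rfl⟩
  exact ⟨a, ha, b, hb, by simp⟩
end

section
/- Let p be a prime with p ≠ 3, and let a, b be integers not divisible by p. If b·a^{-1} is a cubic residue modulo p, then the set of ratios R(C) = { C(x,y)/C(z,w) : x,y,z,w ∈ Z, C(z,w) ≠ 0 } of the form C(x,y) = a x^3 + b y^3 is dense in Q_p. -/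
/-!
By Hensel's lemma, a cubic residue `x₀` of `b a⁻¹` lifts to `ξ ∈ ℤ_p` with `a ξ³ + b = s` for
every `s` in the maximal ideal `pℤ_p`, because the derivative `3 a ξ²` is a unit when `p ≠ 3`.
Since `ℤ` is dense in `ℤ_p`, the values `a x³ + b` with `x ∈ ℤ` are therefore dense in `pℤ_p`.
Every `c ∈ ℚ_p` is a quotient `(c pᵐ) / pᵐ` of two elements of `pℤ_p` for large `m`, and division
is continuous away from a zero denominator.
-/

open Set Filter Polynomial Topology

theorem div_mem_closure_image2_div {K : Type*} [GroupWithZero K] [TopologicalSpace K]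
    [ContinuousInv₀ K] [ContinuousMul K] {S : Set K} {u v : K}
    (hu : u ∈ closure S) (hv : v ∈ closure S) (hv₀ : v ≠ 0) :
    u / v ∈ closure (image2 (· / ·) S S) := by
  have hdiv : ContinuousAt (fun q : K × K => q.1 / q.2) (u, v) :=
    continuousAt_fst.div₀ continuousAt_snd hv₀
  rw [← image_prod]
  exact mem_closure_image hdiv (by rw [closure_prod_eq]; exact ⟨hu, hv⟩)

theorem Int.ModEq.mul_pow_three_of_pow_three_modEq {n a b a' x : ℤ} (ha' : a * a' ≡ 1 [ZMOD n])
    (hx : x ^ 3 ≡ b * a' [ZMOD n]) : a * x ^ 3 ≡ b [ZMOD n] :=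
  calc a * x ^ 3 ≡ a * (b * a') [ZMOD n] := hx.mul_left a
    _ = b * (a * a') := by ring
    _ ≡ b * 1 [ZMOD n] := ha'.mul_left b
    _ = b := mul_one b

namespace PadicInt

variable {p : ℕ} [Fact p.Prime]

theorem norm_intCast_eq_one_of_not_dvd {k : ℤ} (hk : ¬ (p : ℤ) ∣ k) : ‖(k : ℤ_[p])‖ = 1 :=
  le_antisymm (norm_le_one _) (not_lt.mp fun h => hk ((norm_int_lt_one_iff_dvd k).mp h))

theorem norm_three_eq_one (hp3 : p ≠ 3) : ‖(3 : ℤ_[p])‖ = 1 := by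
  simpa using norm_natCast_eq_one_iff.mpr ((Nat.coprime_primes Fact.out Nat.prime_three).mpr hp3)

section Cubic

variable {α β x₀ : ℤ_[p]}

theorem exists_mul_pow_three_add_eq_zero (hp3 : p ≠ 3) (hα : ‖α‖ = 1) (hx₀ : ‖x₀‖ = 1)
    (h : ‖α * x₀ ^ 3 + β‖ < 1) : ∃ ξ : ℤ_[p], α * ξ ^ 3 + β = 0 := by
  have hderiv : ‖aeval x₀ (derivative (C α * X ^ 3 + C β))‖ = 1 := by
    have : aeval x₀ (derivative (C α * X ^ 3 + C β)) = α * (3 * x₀ ^ 2) := by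
      simp only [derivative_add, derivative_C_mul_X_pow, derivative_C, add_zero,
        coe_aeval_eq_eval, eval_C_mul, eval_pow, eval_X]
      push_cast
      ring
    rw [this, norm_mul, norm_mul, norm_pow, hα, hx₀, norm_three_eq_one hp3]
    norm_num
  obtain ⟨ξ, hξ, -⟩ := hensels_lemma (F := C α * X ^ 3 + C β) (a := x₀)
    (by rw [hderiv]; simpa using h)
  exact ⟨ξ, by simpa using hξ⟩

theorem exists_mul_pow_three_add_eq (hp3 : p ≠ 3) (hα : ‖α‖ = 1) (hx₀ : ‖x₀‖ = 1)
    (h : ‖α * x₀ ^ 3 + β‖ < 1) {s : ℤ_[p]} (hs : ‖s‖ < 1) : ∃ ξ : ℤ_[p], α * ξ ^ 3 + β = s := by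
  have h' : ‖α * x₀ ^ 3 + (β - s)‖ < 1 := by
    rw [← add_sub_assoc, sub_eq_add_neg]
    exact (nonarchimedean _ _).trans_lt (max_lt h (by rwa [norm_neg]))
  obtain ⟨ξ, hξ⟩ := exists_mul_pow_three_add_eq_zero hp3 hα hx₀ h'
  exact ⟨ξ, by linear_combination hξ⟩

theorem mem_closure_range_mul_pow_three_add (hp3 : p ≠ 3) (hα : ‖α‖ = 1) (hx₀ : ‖x₀‖ = 1)
    (h : ‖α * x₀ ^ 3 + β‖ < 1) {s : ℤ_[p]} (hs : ‖s‖ < 1) :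
    s ∈ closure (range fun x : ℤ => α * (x : ℤ_[p]) ^ 3 + β) := by
  obtain ⟨ξ, rfl⟩ := exists_mul_pow_three_add_eq hp3 hα hx₀ h hs
  have hξ : ξ ∈ closure (range ((↑) : ℤ → ℤ_[p])) :=
    (denseRange_intCast (p := p)).closure_range ▸ mem_univ ξ
  refine map_mem_closure (f := fun y => α * y ^ 3 + β) (by fun_prop) hξ ?_
  rintro _ ⟨x, rfl⟩
  exact ⟨x, rfl⟩

end Cubic

end PadicInt

open PadicInt in
theorem Padic.mem_closure_range_mul_pow_three_add {p : ℕ} [Fact p.Prime] (hp3 : p ≠ 3)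
    {a b x₀ : ℤ} (ha : ¬ (p : ℤ) ∣ a) (hx₀ : ¬ (p : ℤ) ∣ x₀) (h : (p : ℤ) ∣ a * x₀ ^ 3 + b)
    {s : ℚ_[p]} (hs : ‖s‖ < 1) :
    s ∈ closure (range fun x : ℤ => ((a * x ^ 3 + b : ℤ) : ℚ_[p])) := by
  have hmem := PadicInt.mem_closure_range_mul_pow_three_add (α := a) (β := b) (x₀ := x₀)
    (s := (⟨s, hs.le⟩ : ℤ_[p])) hp3
    (norm_intCast_eq_one_of_not_dvd ha) (norm_intCast_eq_one_of_not_dvd hx₀)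
    (by exact_mod_cast (norm_int_lt_one_iff_dvd _).mpr h) hs
  refine map_mem_closure continuous_subtype_val hmem ?_
  rintro _ ⟨x, rfl⟩
  exact ⟨x, by push_cast; rfl⟩

theorem Padic.exists_eq_div_of_norm_lt_one {p : ℕ} [Fact p.Prime] (c : ℚ_[p]) :
    ∃ u v : ℚ_[p], ‖u‖ < 1 ∧ ‖v‖ < 1 ∧ v ≠ 0 ∧ c = u / v := by
  have hpow := tendsto_pow_atTop_nhds_zero_of_norm_lt_one (Padic.norm_p_lt_one (p := p))
  have hcpow : Tendsto (fun m => c * (p : ℚ_[p]) ^ m) atTop (𝓝 0) := by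
    simpa using hpow.const_mul c
  obtain ⟨m, hcm, hm⟩ := ((hcpow.eventually (Metric.ball_mem_nhds _ one_pos)).and
    (hpow.eventually (Metric.ball_mem_nhds _ one_pos))).exists
  have hpm : (p : ℚ_[p]) ^ m ≠ 0 :=
    pow_ne_zero m (Nat.cast_ne_zero.mpr (Fact.out : p.Prime).ne_zero)
  exact ⟨_, _, mem_ball_zero_iff.mp hcm, mem_ball_zero_iff.mp hm, hpm,
    (mul_div_cancel_right₀ c hpm).symm⟩

/-- For a prime `p ≠ 3` with `p ∤ ab`, if `b·a⁻¹` is a cubic residue modulo `p`,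
then the ratio set of `C(x,y) = a x^3 + b y^3` is dense in `ℚ_p`. -/
theorem stmt_4 (p : ℕ) [Fact p.Prime] (hp3 : p ≠ 3) (a b a' : ℤ)
    (ha : ¬ (p : ℤ) ∣ a) (hb : ¬ (p : ℤ) ∣ b) (ha' : a * a' ≡ 1 [ZMOD (p : ℤ)])
    (hres : ∃ x : ℤ, x ^ 3 ≡ b * a' [ZMOD (p : ℤ)]) :
    Dense {q : ℚ_[p] | ∃ x y z w : ℤ, a * z ^ 3 + b * w ^ 3 ≠ 0 ∧
      q = ((a * x ^ 3 + b * y ^ 3 : ℤ) : ℚ_[p]) / ((a * z ^ 3 + b * w ^ 3 : ℤ) : ℚ_[p])} := by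
  obtain ⟨x₀, hx₀⟩ := hres
  have hcong : a * x₀ ^ 3 ≡ b [ZMOD p] := ha'.mul_pow_three_of_pow_three_modEq hx₀
  have hx₀p : ¬ (p : ℤ) ∣ -x₀ := fun h =>
    hb (by simpa using hcong.dvd.add ((dvd_pow (dvd_neg.mp h) three_ne_zero).mul_left a))
  have hroot : (p : ℤ) ∣ a * (-x₀) ^ 3 + b := by
    rw [show a * (-x₀) ^ 3 + b = b - a * x₀ ^ 3 by ring]
    exact hcong.dvd
  have hclosure (s : ℚ_[p]) (hs : ‖s‖ < 1) :=
    Padic.mem_closure_range_mul_pow_three_add hp3 ha hx₀p hroot hs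
  have ha₀ : a ≠ 0 := by rintro rfl; exact ha (dvd_zero _)
  intro c
  obtain ⟨u, v, hu, hv, hv₀, rfl⟩ := Padic.exists_eq_div_of_norm_lt_one c
  refine closure_mono ?_ (div_mem_closure_image2_div (hclosure u hu) (hclosure v hv) hv₀)
  rintro _ ⟨_, ⟨x, rfl⟩, _, ⟨z, rfl⟩, rfl⟩
  by_cases hz : a * z ^ 3 + b = 0
  -- a zero denominator makes the quotient the junk value `0`, which is `C(0, 0) / C(1, 0)`
  · exact ⟨0, 0, 1, 0, by simpa using ha₀, by simp [hz]⟩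
  · exact ⟨x, 1, z, 1, by simpa using hz, by simp⟩
end

section
/- Let p be a prime with p ∤ 3ab, where a, b are nonzero coprime integers, and let C(x,y) = a x^3 + b y^3. Then R(C) = { C(x,y)/C(z,w) : x,y,z,w ∈ Z, C(z,w) ≠ 0 } is dense in Q_p if and only if b·a^{-1} is a cubic residue modulo p. -/
/-!
If `b a⁻¹ ≡ x³ (mod p)`, then `-x` is a simple root of `a t³ + b` modulo `p` (as `p ∤ 3ab`), so by
Hensel's lemma `t ↦ a t³ + b` maps `ℤ_p` onto a set containing `pℤ_p`. Every element of `ℚ_p` is a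
quotient of two elements of `pℤ_p`, and approximating the corresponding arguments `t` by integers
shows that the ratios `C(x, 1) / C(z, 1)` are already dense.

Conversely, if `b a⁻¹` is not a cube mod `p`, then `p ∣ a x³ + b y³` forces `p ∣ x` and `p ∣ y`.
Descending, every nonzero value of `C` has `p`-adic valuation divisible by `3`, hence so does every
nonzero ratio, and no ratio lies within `‖p‖` of `p`.
-/

open Polynomial

namespace PadicInt

variable {p : ℕ} [Fact p.Prime]

theorem exists_eval_eq_of_norm_lt_one {F : ℤ_[p][X]} {t₀ : ℤ_[p]} (hroot : ‖F.eval t₀‖ < 1)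
    (hsimple : ‖F.derivative.eval t₀‖ = 1) {c : ℤ_[p]} (hc : ‖c‖ < 1) :
    ∃ t, F.eval t = c := by
  have hnorm : ‖(F - C c).eval t₀‖ < 1 := by
    rw [eval_sub, eval_C, sub_eq_add_neg]
    exact (nonarchimedean _ _).trans_lt (max_lt hroot (by rwa [norm_neg]))
  obtain ⟨t, ht, -⟩ := hensels_lemma (F := F - C c) (a := t₀) (by simpa [hsimple] using hnorm)
  exact ⟨t, by simpa [sub_eq_zero] using ht⟩

theorem exists_eq_div_of_norm_lt_one (q : ℚ_[p]) :
    ∃ c₁ c₂ : ℤ_[p], ‖c₁‖ < 1 ∧ ‖c₂‖ < 1 ∧ c₂ ≠ 0 ∧ q = c₁ / c₂ := by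
  have hp : (1 : ℝ) < p := mod_cast (Fact.out : p.Prime).one_lt
  obtain ⟨n, hn⟩ := pow_unbounded_of_one_lt ‖q‖ hp
  have hc₁ : ‖q * (p : ℚ_[p]) ^ (n + 1)‖ < 1 := by
    rw [norm_mul, norm_pow, Padic.norm_p, inv_pow, ← div_eq_mul_inv,
      div_lt_one (by positivity), pow_succ]
    exact hn.trans (lt_mul_of_one_lt_right (by positivity) hp)
  have hc₂ : (p : ℚ_[p]) ^ (n + 1) ≠ 0 :=
    pow_ne_zero _ (Nat.cast_ne_zero.mpr (Fact.out : p.Prime).ne_zero)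
  refine ⟨⟨_, hc₁.le⟩, (p : ℤ_[p]) ^ (n + 1), hc₁, ?_, mod_cast hc₂, ?_⟩
  · rw [norm_pow, norm_p]
    exact pow_lt_one₀ (by positivity) (inv_lt_one_of_one_lt₀ hp) n.succ_ne_zero
  · push_cast
    exact (mul_div_cancel_right₀ q hc₂).symm

end PadicInt

theorem eq_zero_of_mul_cube_add_mul_cube_eq_zero {K : Type*} [Field K] {a b a' x y : K}
    (haa' : a * a' = 1) (hb : ∀ t : K, t ^ 3 ≠ b * a') (h : a * x ^ 3 + b * y ^ 3 = 0) :
    x = 0 ∧ y = 0 := by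
  have hy : y = 0 := by
    by_contra hy
    refine hb (-x / y) ?_
    field_simp
    linear_combination -a' * h + x ^ 3 * haa'
  subst hy
  refine ⟨pow_eq_zero_iff (n := 3) (by norm_num) |>.mp ?_, rfl⟩
  linear_combination a' * h - x ^ 3 * haa'

/-- The set `R(C)` of the paper, for `C(x, y) = a x³ + b y³`. -/
def cubicRatioSet (p : ℕ) [Fact p.Prime] (a b : ℤ) : Set ℚ_[p] :=
  {q | ∃ x y z w : ℤ, a * z ^ 3 + b * w ^ 3 ≠ 0 ∧
    q = ((a * x ^ 3 + b * y ^ 3 : ℤ) : ℚ_[p]) / ((a * z ^ 3 + b * w ^ 3 : ℤ) : ℚ_[p])}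

section CubicRatios

variable {p : ℕ} [Fact p.Prime] {a b : ℤ}

/-- When `a z³ + b = 0` the quotient is the junk value `0`, which is the ratio `C(0,0) / C(1,0)`. -/
theorem intCast_div_mem_cubicRatioSet (ha : a ≠ 0) (x z : ℤ) :
    ((a * x ^ 3 + b : ℤ) : ℚ_[p]) / ((a * z ^ 3 + b : ℤ) : ℚ_[p]) ∈ cubicRatioSet p a b := by
  by_cases hz : a * z ^ 3 + b = 0
  · exact ⟨0, 0, 1, 0, by simpa using ha, by simp [hz]⟩
  · exact ⟨x, 1, z, 1, by simpa using hz, by simp⟩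

theorem dense_cubicRatioSet (ha : a ≠ 0)
    (hsurj : ∀ c : ℤ_[p], ‖c‖ < 1 → ∃ t : ℤ_[p], a * t ^ 3 + b = c) :
    Dense (cubicRatioSet p a b) := by
  intro q
  obtain ⟨c₁, c₂, hc₁, hc₂, hc₂0, rfl⟩ := PadicInt.exists_eq_div_of_norm_lt_one q
  obtain ⟨t₁, rfl⟩ := hsurj c₁ hc₁
  obtain ⟨t₂, rfl⟩ := hsurj c₂ hc₂
  have hf : Continuous fun t : ℤ_[p] => ((a * t ^ 3 + b : ℤ_[p]) : ℚ_[p]) :=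
    continuous_subtype_val.comp (by fun_prop)
  have hcont : ContinuousAt (fun u : ℤ_[p] × ℤ_[p] =>
      ((a * u.1 ^ 3 + b : ℤ_[p]) : ℚ_[p]) / ((a * u.2 ^ 3 + b : ℤ_[p]) : ℚ_[p])) (t₁, t₂) :=
    (hf.comp continuous_fst).continuousAt.div (hf.comp continuous_snd).continuousAt
      (by simpa only [ne_eq, PadicInt.coe_eq_zero] using hc₂0)
  have hdense := (PadicInt.denseRange_intCast.prodMap PadicInt.denseRange_intCast) (t₁, t₂)
  have hmem := mem_closure_image hcont hdense
  refine closure_mono ?_ hmem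
  rintro _ ⟨_, ⟨⟨x, z⟩, rfl⟩, rfl⟩
  simpa using intCast_div_mem_cubicRatioSet ha x z

theorem dvd_and_dvd_of_dvd_mul_cube_add_mul_cube {a' : ℤ} (ha' : a * a' ≡ 1 [ZMOD p])
    (hres : ¬ ∃ t : ℤ, t ^ 3 ≡ b * a' [ZMOD p]) {x y : ℤ}
    (h : (p : ℤ) ∣ a * x ^ 3 + b * y ^ 3) : (p : ℤ) ∣ x ∧ (p : ℤ) ∣ y := by
  simp only [← ZMod.intCast_zmod_eq_zero_iff_dvd] at h ⊢
  push_cast at h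
  refine eq_zero_of_mul_cube_add_mul_cube_eq_zero (a' := (a' : ZMod p)) ?_ ?_ h
  · exact_mod_cast (ZMod.intCast_eq_intCast_iff _ _ p).mpr ha'
  · intro t ht
    obtain ⟨n, rfl⟩ := ZMod.intCast_surjective t
    exact hres ⟨n, (ZMod.intCast_eq_intCast_iff _ _ p).mp (by push_cast; exact ht)⟩

theorem three_dvd_padicValInt_mul_cube_add_mul_cube
    (hdesc : ∀ x y : ℤ, (p : ℤ) ∣ a * x ^ 3 + b * y ^ 3 → (p : ℤ) ∣ x ∧ (p : ℤ) ∣ y)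
    {x y : ℤ} (h : a * x ^ 3 + b * y ^ 3 ≠ 0) : 3 ∣ padicValInt p (a * x ^ 3 + b * y ^ 3) := by
  induction hv : padicValInt p (a * x ^ 3 + b * y ^ 3) using Nat.strong_induction_on
    generalizing x y with
  | _ n ih =>
  by_cases hp : (p : ℤ) ∣ a * x ^ 3 + b * y ^ 3
  · obtain ⟨⟨x, rfl⟩, ⟨y, rfl⟩⟩ := hdesc _ _ hp
    have hscale : a * (p * x) ^ 3 + b * (p * y) ^ 3 = (p : ℤ) ^ 3 * (a * x ^ 3 + b * y ^ 3) := by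
      ring
    rw [hscale] at h hv
    have h' := right_ne_zero_of_mul h
    rw [padicValInt.mul (left_ne_zero_of_mul h) h'] at hv
    simp only [padicValInt, Int.natAbs_pow, Int.natAbs_natCast, padicValNat.prime_pow] at hv
    subst hv
    exact (Nat.dvd_add_right (dvd_refl 3)).mpr (ih _ (by omega) h' rfl)
  · rw [padicValInt.eq_zero_of_not_dvd hp] at hv
    exact hv ▸ dvd_zero 3

theorem three_dvd_valuation_of_mem_cubicRatioSet
    (hdesc : ∀ x y : ℤ, (p : ℤ) ∣ a * x ^ 3 + b * y ^ 3 → (p : ℤ) ∣ x ∧ (p : ℤ) ∣ y)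
    {q : ℚ_[p]} (hq : q ∈ cubicRatioSet p a b) (hq0 : q ≠ 0) : (3 : ℤ) ∣ q.valuation := by
  obtain ⟨x, y, z, w, hzw, rfl⟩ := hq
  have hxy : a * x ^ 3 + b * y ^ 3 ≠ 0 := by
    rintro h
    simp [h] at hq0
  rw [div_eq_mul_inv, Padic.valuation_mul (mod_cast hxy) (inv_ne_zero (mod_cast hzw)),
    Padic.valuation_inv, Padic.valuation_intCast, Padic.valuation_intCast, ← sub_eq_add_neg]
  exact dvd_sub (mod_cast three_dvd_padicValInt_mul_cube_add_mul_cube hdesc hxy)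
    (mod_cast three_dvd_padicValInt_mul_cube_add_mul_cube hdesc hzw)

theorem exists_mul_cube_add_eq {t₀ : ℤ} (hroot : (p : ℤ) ∣ a * t₀ ^ 3 + b)
    (hsimple : ¬ (p : ℤ) ∣ 3 * a * t₀ ^ 2) {c : ℤ_[p]} (hc : ‖c‖ < 1) :
    ∃ t : ℤ_[p], a * t ^ 3 + b = c := by
  set F : ℤ_[p][X] := C (a : ℤ_[p]) * X ^ 3 + C (b : ℤ_[p])
  have hFeval (t : ℤ_[p]) : F.eval t = a * t ^ 3 + b := by simp [F]
  have hF : F.eval (t₀ : ℤ_[p]) = ((a * t₀ ^ 3 + b : ℤ) : ℤ_[p]) := by simp [F]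
  have hF' : F.derivative.eval (t₀ : ℤ_[p]) = ((3 * a * t₀ ^ 2 : ℤ) : ℤ_[p]) := by
    simp [F]
    ring
  obtain ⟨t, ht⟩ := PadicInt.exists_eval_eq_of_norm_lt_one
    (hF ▸ (PadicInt.norm_int_lt_one_iff_dvd _).mpr hroot)
    (hF' ▸ le_antisymm (PadicInt.norm_le_one _)
      (not_lt.mp (mt (PadicInt.norm_int_lt_one_iff_dvd _).mp hsimple))) hc
  exact ⟨t, hFeval t ▸ ht⟩

theorem exists_mul_cube_add_eq_of_modEq {a' x : ℤ} (hpab : ¬ (p : ℤ) ∣ 3 * a * b)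
    (ha' : a * a' ≡ 1 [ZMOD p]) (hx : x ^ 3 ≡ b * a' [ZMOD p]) {c : ℤ_[p]} (hc : ‖c‖ < 1) :
    ∃ t : ℤ_[p], a * t ^ 3 + b = c := by
  have ha'p := (ZMod.intCast_eq_intCast_iff _ _ p).mpr ha'
  have hxp := (ZMod.intCast_eq_intCast_iff _ _ p).mpr hx
  rw [← ZMod.intCast_zmod_eq_zero_iff_dvd] at hpab
  push_cast at ha'p hxp hpab
  refine exists_mul_cube_add_eq (t₀ := -x) ?_ ?_ hc
  · rw [← ZMod.intCast_zmod_eq_zero_iff_dvd]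
    push_cast
    linear_combination -a * hxp - b * ha'p
  · rw [← ZMod.intCast_zmod_eq_zero_iff_dvd]
    push_cast
    intro h0
    exact hpab (by linear_combination (a * x) * h0 - 3 * a ^ 2 * hxp - 3 * a * b * ha'p)

end CubicRatios

namespace Padic

variable {p : ℕ} [Fact p.Prime]

theorem not_dense_of_dvd_valuation {S : Set ℚ_[p]} {n : ℤ} (hn : ¬ n ∣ 1)
    (hS : ∀ q ∈ S, q ≠ 0 → n ∣ q.valuation) : ¬ Dense S := by
  intro hdense
  have hp0 : (p : ℚ_[p]) ≠ 0 := Nat.cast_ne_zero.mpr (Fact.out : p.Prime).ne_zero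
  obtain ⟨s, hs, hdist⟩ := hdense.exists_dist_lt (p : ℚ_[p]) (norm_pos_iff.mpr hp0)
  rw [dist_eq_norm] at hdist
  have hnorm := norm_eq_of_norm_sub_lt_left hdist
  have hs0 : s ≠ 0 := by
    rintro rfl
    exact hp0 (norm_eq_zero.mp (hnorm.trans norm_zero))
  have hp1 : (1 : ℝ) < p := mod_cast (Fact.out : p.Prime).one_lt
  rw [norm_eq_zpow_neg_valuation hp0, norm_eq_zpow_neg_valuation hs0, valuation_p] at hnorm
  have hval : s.valuation = 1 := by
    simpa using (zpow_right_injective₀ (by positivity) hp1.ne' hnorm).symm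
  exact hn (hval ▸ hS s hs hs0)

end Padic

theorem stmt_6_general (p : ℕ) [Fact p.Prime] (a b a' : ℤ) (ha : a ≠ 0)
    (hpab : ¬ (p : ℤ) ∣ 3 * a * b)
    (ha' : a * a' ≡ 1 [ZMOD (p : ℤ)]) :
    Dense {q : ℚ_[p] | ∃ x y z w : ℤ, a * z ^ 3 + b * w ^ 3 ≠ 0 ∧
        q = ((a * x ^ 3 + b * y ^ 3 : ℤ) : ℚ_[p]) / ((a * z ^ 3 + b * w ^ 3 : ℤ) : ℚ_[p])}
      ↔ ∃ x : ℤ, x ^ 3 ≡ b * a' [ZMOD (p : ℤ)] := by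
  change Dense (cubicRatioSet p a b) ↔ _
  constructor
  · intro hdense
    by_contra hres
    have hdesc (x y : ℤ) := dvd_and_dvd_of_dvd_mul_cube_add_mul_cube (x := x) (y := y) ha' hres
    exact Padic.not_dense_of_dvd_valuation (by norm_num)
      (fun _ => three_dvd_valuation_of_mem_cubicRatioSet hdesc) hdense
  · rintro ⟨x, hx⟩
    exact dense_cubicRatioSet ha fun _ hc => exists_mul_cube_add_eq_of_modEq hpab ha' hx hc

/-- For a prime `p ∤ 3ab` with `a, b` nonzero coprime integers, the ratio set of
`C(x,y) = a x^3 + b y^3` is dense in `ℚ_p` iff `b·a⁻¹` is a cubic residue modulo `p`. -/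
theorem stmt_6 (p : ℕ) [Fact p.Prime] (a b a' : ℤ) (ha : a ≠ 0) (hb : b ≠ 0)
    (hcop : IsCoprime a b) (hpab : ¬ (p : ℤ) ∣ 3 * a * b)
    (ha' : a * a' ≡ 1 [ZMOD (p : ℤ)]) :
    Dense {q : ℚ_[p] | ∃ x y z w : ℤ, a * z ^ 3 + b * w ^ 3 ≠ 0 ∧
        q = ((a * x ^ 3 + b * y ^ 3 : ℤ) : ℚ_[p]) / ((a * z ^ 3 + b * w ^ 3 : ℤ) : ℚ_[p])}
      ↔ ∃ x : ℤ, x ^ 3 ≡ b * a' [ZMOD (p : ℤ)] :=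
  stmt_6_general p a b a' ha hpab ha'
end

section
/- Let p be a prime, n any integer, and y, w integers both divisible by p with (y,w) ≠ (0,0) and y^3 ≠ n w^3. Then ν_p(y^3 − n w^3) ≥ 3 and, if moreover p ∤ n or the relevant reduced values are units, ν_p(y^3 − n w^3) is of the form 3m + ν_p(y'^3 − n w'^3) where y = p^m y', w = p^m w' with p ∤ y' or p ∤ w'. In particular, if n is not a cubic residue modulo p, then ν_p(y^3 − n w^3) is a multiple of 3. -/
/-!
Write `(y, w) = p^m (y', w')` with `p` not dividing both of `y'`, `w'`. Since the form
`y^k - n w^k` is homogeneous of degree `k`, its valuation is `k m` plus the valuation at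
`(y', w')`. If `p` divided `y'^k - n w'^k`, then `p ∤ w'` and `y' / w'` would be a `k`-th root of
`n` modulo `p`; so for a non-residue `n` the valuation is exactly `k m`.
-/

namespace Int

variable {p : ℕ} [Fact p.Prime]

theorem exists_pow_modEq_of_dvd_pow_sub_mul_pow {k : ℕ} (hk : k ≠ 0) {n y w : ℤ}
    (hdvd : (p : ℤ) ∣ y ^ k - n * w ^ k) (hyw : ¬(p : ℤ) ∣ y ∨ ¬(p : ℤ) ∣ w) :
    ∃ x : ℤ, x ^ k ≡ n [ZMOD p] := by
  have hmod : (y : ZMod p) ^ k = n * (w : ZMod p) ^ k := by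
    have := (ZMod.intCast_zmod_eq_zero_iff_dvd _ p).mpr hdvd
    push_cast at this
    exact sub_eq_zero.mp this
  have hw : (w : ZMod p) ≠ 0 := by
    intro hw
    rw [hw, zero_pow hk, mul_zero, pow_eq_zero_iff hk] at hmod
    rw [ZMod.intCast_zmod_eq_zero_iff_dvd] at hw hmod
    tauto
  refine ⟨((y : ZMod p) / w).val, ?_⟩
  rw [← ZMod.intCast_eq_intCast_iff]
  push_cast
  rw [ZMod.natCast_zmod_val, div_pow, hmod, mul_div_assoc, div_self (pow_ne_zero k hw), mul_one]

theorem exists_eq_pow_mul_and_not_dvd_or_not_dvd {y w : ℤ} (hyw : ¬(y = 0 ∧ w = 0)) :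
    ∃ m : ℕ, ∃ y' w' : ℤ, y = (p : ℤ) ^ m * y' ∧ w = (p : ℤ) ^ m * w' ∧
      (¬(p : ℤ) ∣ y' ∨ ¬(p : ℤ) ∣ w') := by
  have hgcd : Int.gcd y w ≠ 0 := fun h => hyw (Int.gcd_eq_zero_iff.mp h)
  set m := padicValNat p (Int.gcd y w)
  have hdvd : (p : ℤ) ^ m ∣ (Int.gcd y w : ℤ) := by exact_mod_cast pow_padicValNat_dvd
  obtain ⟨y', hy'⟩ := hdvd.trans (Int.gcd_dvd_left y w)
  obtain ⟨w', hw'⟩ := hdvd.trans (Int.gcd_dvd_right y w)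
  refine ⟨m, y', w', hy', hw', ?_⟩
  by_contra! h
  have hsucc : (p : ℤ) ^ (m + 1) ∣ (Int.gcd y w : ℤ) := by
    rw [pow_succ]
    exact Int.dvd_coe_gcd (hy' ▸ mul_dvd_mul_left _ h.1) (hw' ▸ mul_dvd_mul_left _ h.2)
  exact pow_succ_padicValNat_not_dvd hgcd (by exact_mod_cast hsucc)

theorem padicValInt_pow_mul {a : ℤ} (ha : a ≠ 0) (j : ℕ) :
    padicValInt p ((p : ℤ) ^ j * a) = j + padicValInt p a := by
  have hp : ((p : ℤ) ^ j) ≠ 0 := pow_ne_zero j (Int.natCast_ne_zero.mpr (Fact.out : p.Prime).ne_zero)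
  rw [padicValInt.mul hp ha, ← Int.natCast_pow, padicValInt.of_nat, padicValNat.prime_pow]

theorem padicValInt_pow_mul_pow_sub_mul_pow (n y w : ℤ) (k m : ℕ) (h : y ^ k ≠ n * w ^ k) :
    padicValInt p (((p : ℤ) ^ m * y) ^ k - n * ((p : ℤ) ^ m * w) ^ k) =
      k * m + padicValInt p (y ^ k - n * w ^ k) := by
  have hform : ((p : ℤ) ^ m * y) ^ k - n * ((p : ℤ) ^ m * w) ^ k =
      (p : ℤ) ^ (k * m) * (y ^ k - n * w ^ k) := by ring
  rw [hform, padicValInt_pow_mul (sub_ne_zero.mpr h)]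

theorem dvd_padicValInt_pow_sub_mul_pow {k : ℕ} (hk : k ≠ 0) {n : ℤ}
    (hn : ¬∃ x : ℤ, x ^ k ≡ n [ZMOD p]) {y w : ℤ} (hyw : ¬(y = 0 ∧ w = 0))
    (h : y ^ k ≠ n * w ^ k) :
    k ∣ padicValInt p (y ^ k - n * w ^ k) := by
  obtain ⟨m, y', w', rfl, rfl, hcoprime⟩ := exists_eq_pow_mul_and_not_dvd_or_not_dvd (p := p) hyw
  have h' : y' ^ k ≠ n * w' ^ k := fun h' => h (by rw [mul_pow, mul_pow, h']; ring)
  have hunit : padicValInt p (y' ^ k - n * w' ^ k) = 0 :=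
    padicValInt.eq_zero_of_not_dvd fun hdvd =>
      hn (exists_pow_modEq_of_dvd_pow_sub_mul_pow hk hdvd hcoprime)
  rw [padicValInt_pow_mul_pow_sub_mul_pow n y' w' k m h', hunit, add_zero]
  exact dvd_mul_right k m

theorem le_padicValInt_pow_sub_mul_pow (k : ℕ) {n y w : ℤ} (hy : (p : ℤ) ∣ y)
    (hw : (p : ℤ) ∣ w) (h : y ^ k ≠ n * w ^ k) :
    k ≤ padicValInt p (y ^ k - n * w ^ k) := by
  have hdvd : (p : ℤ) ^ k ∣ y ^ k - n * w ^ k :=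
    dvd_sub (pow_dvd_pow_of_dvd hy k) ((pow_dvd_pow_of_dvd hw k).mul_left n)
  exact ((padicValInt_dvd_iff k _).mp hdvd).resolve_left (sub_ne_zero.mpr h)

end Int

/-- If `p ∣ y` and `p ∣ w` with `(y,w) ≠ (0,0)` and `y^3 ≠ n w^3`, then
`ν_p(y^3 − n w^3) ≥ 3`, and if moreover `n` is not a cubic residue modulo `p`,
then `ν_p(y^3 − n w^3)` is a multiple of 3. -/
theorem stmt_14 (p : ℕ) (hp : p.Prime) (n y w : ℤ)
    (hy : (p : ℤ) ∣ y) (hw : (p : ℤ) ∣ w) (hne : ¬ (y = 0 ∧ w = 0))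
    (h3 : y ^ 3 ≠ n * w ^ 3) :
    3 ≤ padicValInt p (y ^ 3 - n * w ^ 3) ∧
      ((¬ ∃ x : ℤ, x ^ 3 ≡ n [ZMOD (p : ℤ)]) → 3 ∣ padicValInt p (y ^ 3 - n * w ^ 3)) := by
  have : Fact p.Prime := ⟨hp⟩
  exact ⟨Int.le_padicValInt_pow_sub_mul_pow 3 hy hw h3,
    fun hn => Int.dvd_padicValInt_pow_sub_mul_pow three_ne_zero hn hne h3⟩
end

section
/- Let C(x_1,...,x_r) = a_1 x_1^3 + ... + a_r x_r^3 be a primitive integral diagonal cubic form and p a prime. Suppose there exist indices i ≠ j such that p ∤ a_i, a_j = p^k ℓ with p ∤ ℓ and 3 | k (k ≥ 0), and a_i^{-1} ℓ is a cubic residue modulo p^α where α = 1 + ν_p(3). Then R(C) = { C(x)/C(y) : x, y ∈ Z^r, C(y) ≠ 0 } is dense in Q_p. -/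
/-!
Hensel's lemma turns the congruence `aᵢ x₀³ ≡ ℓ (mod p^{1+ν_p(3)})` into an exact cube root
`aᵢ c³ = ℓ` in `ℤ_p` (for `p = 3` after first lifting the congruence from `9` to `27`), so
`aⱼ / aᵢ = γ³` with `γ = c p^{k/3}`. Evaluating `C` at `X eᵢ + Y eⱼ` and `Z eᵢ` shows that `R(C)`
contains `s³ + γ³ t³` for all rationals `s, t`; by density of `ℚ` and continuity its closure
contains every sum of two cubes in `ℚ_p`, and sums of two cubes are dense in any nontrivially
normed field of characteristic `≠ 3`, since `(q t²/3 - 1/t)³ + (1/t)³ → q` as `t → 0`.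
-/

open Topology

lemma dense_setOf_add_cubes {𝕜 : Type*} [NontriviallyNormedField 𝕜] (h3 : (3 : 𝕜) ≠ 0) :
    Dense {z : 𝕜 | ∃ u w : 𝕜, u ^ 3 + w ^ 3 = z} := by
  intro q
  let f : 𝕜 → 𝕜 := fun t => q - q ^ 2 * t ^ 3 / 3 + q ^ 3 * t ^ 6 / 27
  have hf : Continuous f := by fun_prop
  refine mem_closure_of_tendsto (f := f) (b := 𝓝[≠] 0) ?_ ?_
  · simpa [f] using (hf.tendsto 0).mono_left nhdsWithin_le_nhds
  · filter_upwards [self_mem_nhdsWithin] with t (ht : t ≠ 0)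
    have h27 : (27 : 𝕜) = 3 ^ 3 := by norm_num
    refine ⟨q * t ^ 2 / 3 - t⁻¹, t⁻¹, ?_⟩
    simp only [f, h27]
    field_simp
    ring

lemma DenseRange.dense_image_add_mul_cubes {𝕜 α : Type*} [NontriviallyNormedField 𝕜] {φ : α → 𝕜}
    (hφ : DenseRange φ) (h3 : (3 : 𝕜) ≠ 0) {γ : 𝕜} (hγ : γ ≠ 0) :
    Dense ((fun st : 𝕜 × 𝕜 => st.1 ^ 3 + γ ^ 3 * st.2 ^ 3) '' Set.range φ ×ˢ Set.range φ) := by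
  refine DenseRange.dense_image ?_ (by fun_prop) (hφ.prod hφ)
  refine (dense_setOf_add_cubes h3).mono ?_
  rintro _ ⟨u, w, rfl⟩
  exact ⟨(u, w / γ), by field_simp⟩

lemma Rat.exists_eq_div_and_eq_div (s t : ℚ) :
    ∃ X Y Z : ℤ, Z ≠ 0 ∧ s = X / Z ∧ t = Y / Z := by
  refine ⟨s.num * t.den, t.num * s.den, s.den * t.den, by positivity, ?_, ?_⟩
  · push_cast
    rw [mul_div_mul_right _ _ (by positivity), Rat.num_div_den]
  · push_cast
    rw [mul_comm (s.den : ℚ), mul_div_mul_right _ _ (by positivity), Rat.num_div_den]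

lemma Fintype.sum_mul_pow_single_add_single {ι R : Type*} [Fintype ι] [DecidableEq ι]
    [CommSemiring R] {i j : ι} (hij : i ≠ j) (a : ι → R) {n : ℕ} (hn : n ≠ 0) (X Y : R) :
    ∑ t, a t * (Pi.single i X + Pi.single j Y : ι → R) t ^ n = a i * X ^ n + a j * Y ^ n := by
  rw [Fintype.sum_eq_add i j hij]
  · simp [hij, hij.symm]
  · rintro t ⟨hti, htj⟩
    simp [hti, htj, hn]

lemma Int.exists_mul_cube_sub_dvd_27 {a x l : ℤ} (hl : ¬ 3 ∣ l) (h : 9 ∣ a * x ^ 3 - l) :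
    ∃ y : ℤ, 27 ∣ a * y ^ 3 - l := by
  obtain ⟨t, ht⟩ := h
  have hn : ¬ 3 ∣ a * x ^ 2 := fun hd => hl <| by
    have hl' : l = a * x ^ 2 * x - 3 * (3 * t) := by linear_combination -ht
    rw [hl']
    exact dvd_sub (hd.mul_right x) (dvd_mul_right 3 _)
  obtain ⟨e, he⟩ : 3 ∣ (a * x ^ 2) ^ 2 - 1 := by
    rw [show (a * x ^ 2) ^ 2 - 1 = (a * x ^ 2 - 1) * (a * x ^ 2 + 1) by ring]
    rcases (by omega : 3 ∣ a * x ^ 2 - 1 ∨ 3 ∣ a * x ^ 2 + 1) with h | h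
    · exact h.mul_right _
    · exact h.mul_left _
  -- `(x + 3s)³ ≡ x³ + 9x²s (mod 27)`, and `s = -t·(a x²)` cancels `9t` as `(a x²)² ≡ 1 (mod 3)`.
  set s := -(t * (a * x ^ 2))
  exact ⟨x + 3 * s, -(t * e) + a * x * s ^ 2 + a * s ^ 3, by linear_combination ht - 9 * t * he⟩

open Polynomial in
lemma PadicInt.exists_mul_pow_eq {p : ℕ} [Fact p.Prime] {n : ℕ} {a l x : ℤ_[p]}
    (h : ‖a * x ^ n - l‖ < ‖n * a * x ^ (n - 1)‖ ^ 2) : ∃ c : ℤ_[p], a * c ^ n = l := by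
  have hF : ∀ z : ℤ_[p], (C a * X ^ n - C l).aeval z = a * z ^ n - l := fun z => by simp
  have hF' : (derivative (C a * X ^ n - C l)).aeval x = n * a * x ^ (n - 1) := by
    simp [derivative_X_pow]
    ring
  obtain ⟨c, hc, -⟩ := hensels_lemma (F := C a * X ^ n - C l) (a := x) (by rwa [hF, hF'])
  exact ⟨c, sub_eq_zero.mp ((hF c).symm.trans hc)⟩

lemma PadicInt.norm_natCast_eq_zpow {p : ℕ} [Fact p.Prime] {n : ℕ} (hn : n ≠ 0) :
    ‖(n : ℤ_[p])‖ = (p : ℝ) ^ (-(padicValNat p n : ℤ)) := by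
  rw [PadicInt.norm_def, PadicInt.coe_natCast,
    Padic.norm_eq_zpow_neg_valuation (by exact_mod_cast hn), Padic.valuation_natCast]

lemma Int.exists_mul_cube_sub_dvd_pow_lift (p : ℕ) [hp : Fact p.Prime] {a x l : ℤ}
    (hl : ¬ (p : ℤ) ∣ l) (h : (p : ℤ) ^ (1 + padicValNat p 3) ∣ a * x ^ 3 - l) :
    ∃ y : ℤ, (p : ℤ) ^ (1 + 2 * padicValNat p 3) ∣ a * y ^ 3 - l := by
  rcases eq_or_ne p 3 with rfl | hp3
  · rw [padicValNat_self] at h ⊢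
    exact Int.exists_mul_cube_sub_dvd_27 hl (by simpa using h)
  · have hν : padicValNat p 3 = 0 := padicValNat.eq_zero_of_not_dvd
      fun hd => hp3 ((Nat.prime_dvd_prime_iff_eq hp.out Nat.prime_three).mp hd)
    exact ⟨x, by simpa [hν] using h⟩

lemma PadicInt.exists_mul_cube_eq_intCast (p : ℕ) [Fact p.Prime] {a x l : ℤ}
    (hl : ¬ (p : ℤ) ∣ l) (h : (p : ℤ) ^ (1 + padicValNat p 3) ∣ a * x ^ 3 - l) :
    ∃ c : ℤ_[p], (a : ℤ_[p]) * c ^ 3 = l := by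
  obtain ⟨y, hy⟩ := Int.exists_mul_cube_sub_dvd_pow_lift p hl h
  have hay : ‖((a * y ^ 2 : ℤ) : ℤ_[p])‖ = 1 := by
    refine le_antisymm (PadicInt.norm_le_one _) (not_lt.mp fun hlt => hl ?_)
    have hdvd : (p : ℤ) ∣ a * y ^ 3 := by
      rw [pow_succ, ← mul_assoc]
      exact (PadicInt.norm_intCast_lt_one_iff.mp hlt).mul_right y
    have := (dvd_pow_self (p : ℤ) (by omega : 1 + 2 * padicValNat p 3 ≠ 0)).trans hy
    simpa using (dvd_sub hdvd this)
  have hp1 : (1 : ℝ) < p := by exact_mod_cast (Fact.out : p.Prime).one_lt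
  refine PadicInt.exists_mul_pow_eq (x := (y : ℤ_[p])) ?_
  calc ‖(a : ℤ_[p]) * (y : ℤ_[p]) ^ 3 - l‖ ≤ (p : ℝ) ^ (-((1 + 2 * padicValNat p 3 : ℕ) : ℤ)) := by
        exact_mod_cast PadicInt.norm_int_le_pow_iff_dvd.mpr hy
    _ < (p : ℝ) ^ (-(2 * padicValNat p 3 : ℤ)) := zpow_lt_zpow_right₀ hp1 (by omega)
    _ = ‖((3 : ℕ) : ℤ_[p]) * a * y ^ (3 - 1)‖ ^ 2 := by
        have hay' : ‖(a : ℤ_[p]) * (y : ℤ_[p]) ^ (3 - 1)‖ = 1 := by simpa using hay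
        rw [mul_assoc, norm_mul, hay', mul_one, PadicInt.norm_natCast_eq_zpow three_ne_zero,
          ← zpow_natCast, ← zpow_mul]
        ring_nf

lemma Padic.exists_ne_zero_mul_cube_eq (p : ℕ) [hp : Fact p.Prime] {a x l : ℤ} {k : ℕ}
    (hl : ¬ (p : ℤ) ∣ l) (hk : 3 ∣ k) (h : (p : ℤ) ^ (1 + padicValNat p 3) ∣ a * x ^ 3 - l) :
    ∃ γ : ℚ_[p], γ ≠ 0 ∧ (a : ℚ_[p]) * γ ^ 3 = ((p : ℤ) ^ k * l : ℤ) := by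
  obtain ⟨c, hc⟩ := PadicInt.exists_mul_cube_eq_intCast p hl h
  obtain ⟨k', rfl⟩ := hk
  have hc' : (a : ℚ_[p]) * (c : ℚ_[p]) ^ 3 = l := by
    exact_mod_cast congrArg ((↑) : ℤ_[p] → ℚ_[p]) hc
  have hγ : (a : ℚ_[p]) * (c * (p : ℚ_[p]) ^ k') ^ 3 = ((p : ℤ) ^ (3 * k') * l : ℤ) := by
    rw [mul_pow, ← mul_assoc, hc', ← pow_mul]
    push_cast
    ring
  refine ⟨_, fun h0 => ?_, hγ⟩
  have hl0 : l ≠ 0 := fun h => hl (h ▸ dvd_zero _)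
  have hpl : (p : ℤ) ^ (3 * k') * l ≠ 0 :=
    mul_ne_zero (pow_ne_zero _ (by exact_mod_cast hp.out.ne_zero)) hl0
  rw [h0, zero_pow three_ne_zero, mul_zero, eq_comm] at hγ
  exact hpl (by exact_mod_cast hγ)

theorem stmt_15_general (p : ℕ) [Fact p.Prime] (r : ℕ) (a : Fin r → ℤ)
    (i j : Fin r) (hij : i ≠ j) (k : ℕ) (l a' : ℤ)
    (hai : ¬ (p : ℤ) ∣ a i) (haj : a j = (p : ℤ) ^ k * l) (hl : ¬ (p : ℤ) ∣ l)
    (hk : 3 ∣ k)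
    (hinv : a i * a' ≡ 1 [ZMOD ((p : ℤ) ^ (1 + padicValNat p 3))])
    (hres : ∃ x : ℤ, x ^ 3 ≡ a' * l [ZMOD ((p : ℤ) ^ (1 + padicValNat p 3))]) :
    Dense {q : ℚ_[p] | ∃ x y : Fin r → ℤ, (∑ t, a t * (y t) ^ 3) ≠ 0 ∧
      q = ((∑ t, a t * (x t) ^ 3 : ℤ) : ℚ_[p]) / ((∑ t, a t * (y t) ^ 3 : ℤ) : ℚ_[p])} := by
  obtain ⟨x₀, hx₀⟩ := hres
  have hcube : (p : ℤ) ^ (1 + padicValNat p 3) ∣ a i * x₀ ^ 3 - l :=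
    ((hx₀.mul_left (a i)).trans (by simpa [mul_assoc] using hinv.mul_right l)).symm.dvd
  obtain ⟨γ, hγ0, hγ⟩ := Padic.exists_ne_zero_mul_cube_eq p hl hk hcube
  rw [← haj] at hγ
  have hai0 : a i ≠ 0 := fun h => hai (h ▸ dvd_zero _)
  refine ((Padic.denseRange_ratCast p).dense_image_add_mul_cubes three_ne_zero hγ0).mono ?_
  rintro _ ⟨⟨_, _⟩, ⟨⟨s, rfl⟩, ⟨t, rfl⟩⟩, rfl⟩
  obtain ⟨X, Y, Z, hZ, rfl, rfl⟩ := Rat.exists_eq_div_and_eq_div s t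
  have hy : ∑ t, a t * (Pi.single i Z : Fin r → ℤ) t ^ 3 = a i * Z ^ 3 := by
    simpa using Fintype.sum_mul_pow_single_add_single hij a three_ne_zero Z 0
  refine ⟨Pi.single i X + Pi.single j Y, Pi.single i Z,
    hy ▸ mul_ne_zero hai0 (pow_ne_zero 3 hZ), ?_⟩
  rw [Fintype.sum_mul_pow_single_add_single hij a three_ne_zero, hy]
  push_cast
  rw [← hγ]
  field_simp

/-- For a primitive integral diagonal cubic form `C = a₁x₁³ + ⋯ + aᵣxᵣ³`, if there are
indices `i ≠ j` with `p ∤ aᵢ`, `aⱼ = p^k ℓ` with `p ∤ ℓ` and `3 ∣ k`, and `aᵢ⁻¹ℓ`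
is a cubic residue modulo `p^α` with `α = 1 + ν_p(3)`, then `R(C)` is dense in `ℚ_p`. -/
theorem stmt_15 (p : ℕ) [Fact p.Prime] (r : ℕ) (a : Fin r → ℤ)
    (hprim : Finset.univ.gcd (fun i => (a i).natAbs) = 1)
    (i j : Fin r) (hij : i ≠ j) (k : ℕ) (l a' : ℤ)
    (hai : ¬ (p : ℤ) ∣ a i) (haj : a j = (p : ℤ) ^ k * l) (hl : ¬ (p : ℤ) ∣ l)
    (hk : 3 ∣ k)
    (hinv : a i * a' ≡ 1 [ZMOD ((p : ℤ) ^ (1 + padicValNat p 3))])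
    (hres : ∃ x : ℤ, x ^ 3 ≡ a' * l [ZMOD ((p : ℤ) ^ (1 + padicValNat p 3))]) :
    Dense {q : ℚ_[p] | ∃ x y : Fin r → ℤ, (∑ t, a t * (y t) ^ 3) ≠ 0 ∧
      q = ((∑ t, a t * (x t) ^ 3 : ℤ) : ℚ_[p]) / ((∑ t, a t * (y t) ^ 3 : ℤ) : ℚ_[p])} :=
  stmt_15_general p r a i j hij k l a' hai haj hl hk hinv hres
end

section
/- Let f: Z_p → Q_p be given by a polynomial with coefficients in Z_p that has a simple zero in Z_p. Then the quotient set R(f(Z^+)) = { f(m)/f(n) : m, n ∈ Z^+, f(n) ≠ 0 } is dense in Q_p. -/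
/-!
View `f` as a polynomial `F` over `ℚ_[p]` and let `α` be its simple zero. Since
`F (α + h) = h * G (α + h)` with `G = F /ₘ (X - C α)` and
`G α = F' α ≠ 0`, the ratio `F (α + x * h) / F (α + h) = x * G (α + x * h) / G (α + h)`
tends to `x` as `h → 0`, `h ≠ 0`. For small `h` both arguments lie in `ℤ_[p]`, which is open in
`ℚ_[p]`, so the quotient set of `f` on `ℤ_[p]` is dense. The positive integers are dense in
`ℤ_[p]` and `(u, v) ↦ F u / F v` is continuous where `F v ≠ 0`, so that quotient set lies in the
closure of the quotient set on the positive integers.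
-/

open Polynomial Filter Topology Set

namespace Polynomial

variable {K : Type*} [Field K]

theorem eval_add_eq_mul_eval_divByMonic {F : K[X]} {α : K} (hα : F.IsRoot α) (y : K) :
    F.eval (α + y) = y * (F /ₘ (X - C α)).eval (α + y) := by
  conv_lhs => rw [← mul_divByMonic_eq_iff_isRoot.mpr hα]
  simp

theorem eval_divByMonic_X_sub_C_self (F : K[X]) (α : K) :
    (F /ₘ (X - C α)).eval α = F.derivative.eval α := by
  simpa using
    congrArg (eval α) (divByMonic_add_X_sub_C_mul_derivative_divByMonic_eq_derivative F α)

def quotientSet (F : K[X]) (A : Set K) : Set K :=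
  {q | ∃ m ∈ A, ∃ n ∈ A, F.eval n ≠ 0 ∧ q = F.eval m / F.eval n}

variable [TopologicalSpace K] [IsTopologicalDivisionRing K]

theorem quotientSet_closure_subset [T1Space K] (F : K[X]) (A : Set K) :
    quotientSet F (closure A) ⊆ closure (quotientSet F A) := by
  rintro _ ⟨u, hu, v, hv, hFv, rfl⟩
  have hU : IsOpen {w : K × K | F.eval w.2 ≠ 0} :=
    isOpen_compl_singleton.preimage (F.continuous.comp (continuous_snd (X := K) (Y := K)))
  have huv : (u, v) ∈ closure ({w : K × K | F.eval w.2 ≠ 0} ∩ A ×ˢ A) :=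
    hU.inter_closure ⟨hFv, by rw [closure_prod_eq]; exact ⟨hu, hv⟩⟩
  have hcont : ContinuousAt (fun w : K × K => F.eval w.1 / F.eval w.2) (u, v) :=
    (F.continuous.comp continuous_fst).continuousAt.div
      (F.continuous.comp continuous_snd).continuousAt hFv
  refine closure_mono ?_
    (mem_closure_image (f := fun w : K × K => F.eval w.1 / F.eval w.2) hcont huv)
  rintro _ ⟨⟨m, n⟩, ⟨hFn, hm, hn⟩, rfl⟩
  exact ⟨m, hm, n, hn, hFn, rfl⟩

theorem eventually_eval_add_ne_zero [T1Space K] {F : K[X]} {α : K} (hα : F.IsRoot α)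
    (hF' : F.derivative.eval α ≠ 0) : ∀ᶠ h in 𝓝[≠] 0, F.eval (α + h) ≠ 0 := by
  have hG :
      Tendsto (fun h => (F /ₘ (X - C α)).eval (α + h)) (𝓝 0) (𝓝 (F.derivative.eval α)) := by
    rw [← eval_divByMonic_X_sub_C_self]
    simpa [Function.comp_def] using
      ((F /ₘ (X - C α)).continuous.comp (continuous_const_add α)).tendsto 0
  filter_upwards [self_mem_nhdsWithin, (hG.eventually_ne hF').filter_mono nhdsWithin_le_nhds]
    with h (hh : h ≠ 0) hGh
  rw [eval_add_eq_mul_eval_divByMonic hα]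
  exact mul_ne_zero hh hGh

theorem tendsto_eval_div_eval_of_isRoot {F : K[X]} {α : K} (hα : F.IsRoot α)
    (hF' : F.derivative.eval α ≠ 0) (x : K) :
    Tendsto (fun h => F.eval (α + x * h) / F.eval (α + h)) (𝓝[≠] 0) (𝓝 x) := by
  set G := F /ₘ (X - C α)
  have hG : G.eval α ≠ 0 := by rwa [eval_divByMonic_X_sub_C_self]
  have hGt (c : K) : Tendsto (fun h => G.eval (α + c * h)) (𝓝 0) (𝓝 (G.eval α)) := by
    simpa [Function.comp_def] using
      (G.continuous.comp (by fun_prop : Continuous fun h : K => α + c * h)).tendsto 0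
  have hratio : Tendsto (fun h => x * G.eval (α + x * h) / G.eval (α + 1 * h)) (𝓝 0) (𝓝 x) := by
    simpa [hG, Pi.div_def] using ((hGt x).const_mul x).div (hGt 1) hG
  refine (hratio.mono_left nhdsWithin_le_nhds).congr' ?_
  filter_upwards [self_mem_nhdsWithin] with h (hh : h ≠ 0)
  rw [eval_add_eq_mul_eval_divByMonic hα, eval_add_eq_mul_eval_divByMonic hα, one_mul,
    mul_right_comm x h, mul_comm h, mul_div_mul_right _ _ hh]

theorem dense_quotientSet_of_mem_nhds [T1Space K] [(𝓝[≠] (0 : K)).NeBot] {F : K[X]} {α : K}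
    (hα : F.IsRoot α) (hF' : F.derivative.eval α ≠ 0) {A : Set K} (hA : A ∈ 𝓝 α) :
    Dense (quotientSet F A) := by
  have hmem (c : K) : ∀ᶠ h in 𝓝[≠] 0, α + c * h ∈ A :=
    nhdsWithin_le_nhds <|
      (Continuous.tendsto' (f := fun h => α + c * h) (by fun_prop) 0 α (by simp)) hA
  intro x
  refine mem_closure_of_tendsto (tendsto_eval_div_eval_of_isRoot hα hF' x) ?_
  filter_upwards [eventually_eval_add_ne_zero hα hF', hmem x, hmem 1] with h hne hx h1
  rw [one_mul] at h1
  exact ⟨_, hx, _, h1, hne, rfl⟩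

end Polynomial

namespace PadicInt

variable {p : ℕ} [Fact p.Prime]

theorem range_coe_subset_closure_range_natCast_succ :
    range ((↑) : ℤ_[p] → ℚ_[p]) ⊆ closure (range fun n : ℕ => ((n + 1 : ℕ) : ℚ_[p])) := by
  have hdense : DenseRange fun n : ℕ => ((n + 1 : ℕ) : ℤ_[p]) := by
    simpa [Function.comp_def] using
      (Homeomorph.addRight (1 : ℤ_[p])).surjective.denseRange.comp denseRange_natCast
        (Homeomorph.addRight _).continuous
  rintro _ ⟨y, rfl⟩
  refine map_mem_closure isOpenEmbedding_coe.continuous (hdense y) ?_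
  rintro _ ⟨n, rfl⟩
  exact ⟨n, by simp⟩

end PadicInt

/-- If a polynomial `f` over `ℤ_p` has a simple zero in `ℤ_p`, then the quotient set
of its values at positive integers is dense in `ℚ_p`. -/
theorem stmt_16 (p : ℕ) [Fact p.Prime] (f : Polynomial ℤ_[p])
    (hsimple : ∃ α : ℤ_[p], f.eval α = 0 ∧ f.derivative.eval α ≠ 0) :
    Dense {q : ℚ_[p] | ∃ m n : ℕ, 0 < m ∧ 0 < n ∧ f.eval (n : ℤ_[p]) ≠ 0 ∧
      q = ((f.eval (m : ℤ_[p]) : ℤ_[p]) : ℚ_[p]) / ((f.eval (n : ℤ_[p]) : ℤ_[p]) : ℚ_[p])} := by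
  obtain ⟨α, hα, hα'⟩ := hsimple
  set F := f.map PadicInt.Coe.ringHom
  set P := range fun n : ℕ => ((n + 1 : ℕ) : ℚ_[p])
  have hroot : F.IsRoot α := by
    change F.eval (PadicInt.Coe.ringHom α) = 0
    rw [eval_map_apply, hα, map_zero]
  have hderiv : F.derivative.eval (α : ℚ_[p]) ≠ 0 := by
    change F.derivative.eval (PadicInt.Coe.ringHom α) ≠ 0
    rw [derivative_map, eval_map_apply]
    exact (map_ne_zero_iff _ Subtype.val_injective).mpr hα'
  have hnhds : closure P ∈ 𝓝 (α : ℚ_[p]) :=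
    mem_of_superset (PadicInt.isOpenEmbedding_coe.isOpen_range.mem_nhds ⟨α, rfl⟩)
      PadicInt.range_coe_subset_closure_range_natCast_succ
  have hP : Dense (quotientSet F P) := dense_closure.mp <|
    (dense_quotientSet_of_mem_nhds hroot hderiv hnhds).mono (quotientSet_closure_subset F P)
  refine hP.mono ?_
  rintro _ ⟨_, ⟨m, rfl⟩, _, ⟨n, rfl⟩, hn, rfl⟩
  simp only [F, eval_natCast_map] at hn ⊢
  exact ⟨m + 1, n + 1, m.succ_pos, n.succ_pos, fun h => hn (by rw [h]; rfl), rfl⟩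
end

section
/- Let C be an integral cubic form in r variables such that C, viewed over Q_p, has a non-singular zero x₀ ∈ Z_p^r (i.e., C(x₀) = 0 and ∂C/∂x_i(x₀) ≠ 0 for some i). Then R(C) = { C(x)/C(y) : x, y ∈ Z^r, C(y) ≠ 0 } is dense in Q_p. -/
/-!
Restricting `C` to the coordinate line through the non-singular zero `x₀` gives a one-variable
polynomial with a simple root, so by Hensel's lemma every sufficiently small `v ∈ ℤ_p` is a value
of `C` on `ℤ_p^r`. Since `ℤ^r` is dense in `ℤ_p^r`, the closure of the integer values of `C` is a
neighbourhood of `0` in `ℚ_p`. For such a set `V` the quotients are dense: any `q` equals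
`(q b) / b` with `b ≠ 0` so small that `q b` and `b` both lie in the closure of `V`.
-/

open MvPolynomial Set Filter Topology
open scoped Polynomial

namespace MvPolynomial

variable {R σ : Type*} [CommSemiring R] [DecidableEq σ]

noncomputable def restrictLine (x : σ → R) (i : σ) (φ : MvPolynomial σ R) : R[X] :=
  aeval (Function.update (Polynomial.C ∘ x) i Polynomial.X) φ

theorem eval_restrictLine (x : σ → R) (i : σ) (φ : MvPolynomial σ R) (t : R) :
    (restrictLine x i φ).eval t = eval (Function.update x i t) φ := by
  have hline :
      (fun j => Polynomial.aeval t (Function.update (Polynomial.C ∘ x) i Polynomial.X j)) =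
        Function.update x i t := by
    funext j
    rcases eq_or_ne j i with rfl | hj <;> simp [*]
  rw [← Polynomial.coe_aeval_eq_eval, restrictLine, ← AlgHom.comp_apply, comp_aeval, hline]
  rfl

theorem derivative_restrictLine (x : σ → R) (i : σ) (φ : MvPolynomial σ R) :
    Polynomial.derivative (restrictLine x i φ) = restrictLine x i (pderiv i φ) := by
  induction φ using MvPolynomial.induction_on with
  | C a => simp [restrictLine]
  | add f g hf hg =>
    simp only [restrictLine, map_add] at hf hg ⊢
    rw [hf, hg]
  | mul_X f j hf =>
    simp only [restrictLine, map_mul, aeval_X, Polynomial.derivative_mul, pderiv_mul, map_add,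
      pderiv_X] at hf ⊢
    rw [hf]
    rcases eq_or_ne j i with rfl | hj <;> simp [*]

end MvPolynomial

theorem dense_image2_div_of_closure_mem_nhds_zero {K : Type*} [NontriviallyNormedField K]
    {V : Set K} (hV : closure V ∈ 𝓝 0) : Dense (image2 (· / ·) V (V \ {0})) := by
  intro q
  have hqmul : Tendsto (q * ·) (𝓝 0) (𝓝 0) := by
    simpa using (continuous_const_mul q).tendsto 0
  obtain ⟨b, ⟨hqb, hb⟩, hb0⟩ : ∃ b, (q * b ∈ closure V ∧ b ∈ closure V) ∧ b ≠ 0 :=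
    ((((hqmul.eventually_mem hV).and hV).filter_mono nhdsWithin_le_nhds).and
      (self_mem_nhdsWithin : {0}ᶜ ∈ 𝓝[≠] (0 : K))).exists
  have hb' : b ∈ closure (V \ {0}) := by
    rw [sdiff_eq_compl_inter]
    exact isOpen_compl_singleton.inter_closure ⟨hb0, hb⟩
  have hmem : (q * b, b) ∈ closure (V ×ˢ (V \ {0})) := by
    rw [closure_prod_eq]; exact ⟨hqb, hb'⟩
  rw [← image_prod]
  have hdiv : ContinuousAt (fun x : K × K => x.1 / x.2) (q * b, b) :=
    continuousAt_fst.div continuousAt_snd hb0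
  simpa [mul_div_cancel_right₀ q hb0] using mem_closure_image hdiv hmem

namespace PadicInt

variable {p : ℕ} [Fact p.Prime] {σ : Type*}

theorem range_eval_mem_nhds {φ : MvPolynomial σ ℤ_[p]} {x₀ : σ → ℤ_[p]} {i : σ}
    (hi : eval x₀ (pderiv i φ) ≠ 0) : range (fun z => eval z φ) ∈ 𝓝 (eval x₀ φ) := by
  classical
  refine Metric.mem_nhds_iff.2 ⟨_, pow_pos (norm_pos_iff.2 hi) 2, fun v hv => ?_⟩
  set F := restrictLine x₀ i φ - Polynomial.C v
  have hF : ‖F.eval (x₀ i)‖ < ‖(Polynomial.derivative F).eval (x₀ i)‖ ^ 2 := by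
    rw [Metric.mem_ball, dist_eq_norm] at hv
    simpa [F, eval_restrictLine, derivative_restrictLine, norm_sub_rev] using hv
  obtain ⟨z, hz, -⟩ := hensels_lemma hF
  exact ⟨Function.update x₀ i z, by simpa [F, eval_restrictLine, sub_eq_zero] using hz⟩

theorem range_eval_subset_closure_range_eval_intCast (φ : MvPolynomial σ ℤ_[p]) :
    range (fun z => eval z φ) ⊆
      closure (range fun x : σ → ℤ => eval (fun j => (x j : ℤ_[p])) φ) :=
  calc range (fun z => eval z φ)
      = (fun z => eval z φ) '' closure (range (Pi.map fun _ => Int.cast)) := by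
        rw [(DenseRange.piMap fun _ => denseRange_intCast).closure_range, image_univ]
    _ ⊆ closure ((fun z => eval z φ) '' range (Pi.map fun _ => Int.cast)) :=
        image_closure_subset_closure_image (continuous_eval φ)
    _ = _ := by rw [← range_comp]; rfl

theorem closure_range_eval_intCast_mem_nhds_zero {C : MvPolynomial σ ℤ} {x₀ : σ → ℤ_[p]} {i : σ}
    (hzero : eval x₀ (map (Int.castRingHom ℤ_[p]) C) = 0)
    (hi : eval x₀ (pderiv i (map (Int.castRingHom ℤ_[p]) C)) ≠ 0) :
    closure (range fun x : σ → ℤ => ((eval x C : ℤ) : ℚ_[p])) ∈ 𝓝 0 := by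
  have hZp := mem_of_superset (hzero ▸ range_eval_mem_nhds hi)
    (range_eval_subset_closure_range_eval_intCast _)
  have hQp := isOpenEmbedding_coe.image_mem_nhds.2 hZp
  rw [coe_zero] at hQp
  refine mem_of_superset hQp
    ((image_closure_subset_closure_image isOpenEmbedding_coe.continuous).trans (closure_mono ?_))
  rintro _ ⟨_, ⟨x, rfl⟩, rfl⟩
  refine ⟨x, ?_⟩
  simp only [eval_map, ← coe_intCast, ← eq_intCast (Int.castRingHom ℤ_[p]), eval₂_comp]
  rfl

end PadicInt

theorem stmt_17_general (p : ℕ) [Fact p.Prime] (r : ℕ) (C : MvPolynomial (Fin r) ℤ)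
    (x₀ : Fin r → ℤ_[p])
    (hzero : MvPolynomial.eval x₀ (MvPolynomial.map (Int.castRingHom ℤ_[p]) C) = 0)
    (hns : ∃ i : Fin r,
      MvPolynomial.eval x₀ (MvPolynomial.pderiv i (MvPolynomial.map (Int.castRingHom ℤ_[p]) C)) ≠ 0) :
    Dense {q : ℚ_[p] | ∃ x y : Fin r → ℤ, MvPolynomial.eval y C ≠ 0 ∧
      q = ((MvPolynomial.eval x C : ℤ) : ℚ_[p]) / ((MvPolynomial.eval y C : ℤ) : ℚ_[p])} := by
  obtain ⟨i, hi⟩ := hns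
  convert dense_image2_div_of_closure_mem_nhds_zero
    (PadicInt.closure_range_eval_intCast_mem_nhds_zero hzero hi) using 1
  ext q
  simp only [mem_ofPred_eq, mem_image2, Set.mem_sdiff, mem_range, mem_singleton_iff]
  constructor
  · rintro ⟨x, y, hy, rfl⟩
    exact ⟨_, ⟨x, rfl⟩, _, ⟨⟨y, rfl⟩, by simpa using hy⟩, rfl⟩
  · rintro ⟨_, ⟨x, rfl⟩, _, ⟨⟨y, rfl⟩, hy⟩, rfl⟩
    exact ⟨x, y, by simpa using hy, rfl⟩

/-- If an integral cubic form `C` in `r` variables has a non-singular zero over `ℤ_p`,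
then `R(C)` is dense in `ℚ_p`. -/
theorem stmt_17 (p : ℕ) [Fact p.Prime] (r : ℕ) (C : MvPolynomial (Fin r) ℤ)
    (hhom : C.IsHomogeneous 3) (x₀ : Fin r → ℤ_[p])
    (hzero : MvPolynomial.eval x₀ (MvPolynomial.map (Int.castRingHom ℤ_[p]) C) = 0)
    (hns : ∃ i : Fin r,
      MvPolynomial.eval x₀ (MvPolynomial.pderiv i (MvPolynomial.map (Int.castRingHom ℤ_[p]) C)) ≠ 0) :
    Dense {q : ℚ_[p] | ∃ x y : Fin r → ℤ, MvPolynomial.eval y C ≠ 0 ∧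
      q = ((MvPolynomial.eval x C : ℤ) : ℚ_[p]) / ((MvPolynomial.eval y C : ℤ) : ℚ_[p])} :=
  stmt_17_general p r C x₀ hzero hns
end
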